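/- Let A(P,Z) be a propositional theory with symbols partitioned into P₁,...,Pₙ (minimized with priorities P₁ < ... < Pₙ), Q = {q₁,...,qₘ} (fixed), and Z (varied), and let R = {r₁,...,rₘ} be fresh symbols. Let α be a formula over P = P₁∪...∪Pₙ only. Then α holds in all prioritized minimal models of A w.r.t. P₁ < ... < Pₙ with Z varied and Q fixed iff α holds in all prioritized minimal models of A ∧ ⋀ᵢ(rᵢ ↔ ¬qᵢ) w.r.t. (Q∪R) < P₁ < ... < Pₙ with Z varied and nothing fixed. -/

import Mathlib

/-- The prioritized order `⪯` for priority classes `C 0 < C 1 < ... < C (k-1)`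
(`C 0` most strongly minimized) with fixed symbols `F`. -/
def prioLe {τ : Type*} {k : ℕ} (C : Fin k → Set τ) (F : Set τ)
    (I₁ I₂ : Set τ) : Prop :=
  I₁ ∩ F = I₂ ∩ F ∧
    ∀ i : Fin k, (∀ j < i, I₁ ∩ C j = I₂ ∩ C j) → I₁ ∩ C i ⊆ I₂ ∩ C i

def prioLt {τ : Type*} {k : ℕ} (C : Fin k → Set τ) (F : Set τ)
    (I₁ I₂ : Set τ) : Prop :=
  prioLe C F I₁ I₂ ∧ ¬ prioLe C F I₂ I₁

/-- Prioritized minimal model of the theory `T`. -/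
def IsPrioMinModel {τ : Type*} {k : ℕ} (T : Set τ → Prop)
    (C : Fin k → Set τ) (F : Set τ) (M : Set τ) : Prop :=
  T M ∧ ¬ ∃ M', T M' ∧ prioLt C F M' M

/-- Extended language: the original symbols `σ` plus one fresh symbol `r_q`
for each `q ∈ Q`. -/
abbrev ExtSym (σ : Type*) (Q : Set σ) := σ ⊕ {q : σ // q ∈ Q}

/-- The extended theory `A ∧ ⋀_q (r_q ↔ ¬q)` over the extended language. -/
def ExtTheory {σ : Type*} (A : Set σ → Prop) (Q : Set σ)
    (N : Set (ExtSym σ Q)) : Prop :=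
  A {x | Sum.inl x ∈ N} ∧
    ∀ q : {q : σ // q ∈ Q}, Sum.inr q ∈ N ↔ Sum.inl (q : σ) ∉ N

/-- Priority classes of the extended problem: `(Q ∪ R) < P₁ < ... < Pₙ`. -/
def ExtClasses {σ : Type*} {n : ℕ} (P : Fin n → Set σ) (Q : Set σ) :
    Fin (n + 1) → Set (ExtSym σ Q) :=
  Fin.cases (Sum.inl '' Q ∪ Set.range Sum.inr) (fun i => Sum.inl '' P i)

section Aux

variable {σ : Type*} {n : ℕ}

/-- The canonical extended interpretation corresponding to `M`. -/
def toExt (Q : Set σ) (M : Set σ) : Set (ExtSym σ Q) :=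
  {x | Sum.elim (· ∈ M) (fun q => (q : σ) ∉ M) x}

lemma toExt_inl (Q M : Set σ) : {x | Sum.inl x ∈ toExt Q M} = M := rfl

lemma extTheory_toExt (A : Set σ → Prop) (Q M : Set σ) :
    ExtTheory A Q (toExt Q M) ↔ A M := by
  constructor
  · rintro ⟨h, -⟩; exact h
  · intro h; exact ⟨h, fun q => Iff.rfl⟩

lemma model_eq_toExt {A : Set σ → Prop} {Q : Set σ} {N : Set (ExtSym σ Q)}
    (hN : ExtTheory A Q N) : N = toExt Q {x | Sum.inl x ∈ N} := by
  ext x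
  cases x with
  | inl a => rfl
  | inr q => exact hN.2 q

lemma inter_zero_subset (P : Fin n → Set σ) (Q M₁ M₂ : Set σ) :
    toExt Q M₁ ∩ ExtClasses P Q 0 ⊆ toExt Q M₂ ∩ ExtClasses P Q 0 ↔
      M₁ ∩ Q = M₂ ∩ Q := by
  constructor
  · intro h
    ext q
    simp only [Set.mem_inter_iff]
    constructor
    · rintro ⟨hq, hqQ⟩
      have := h (a := Sum.inl q) ⟨hq, Or.inl ⟨q, hqQ, rfl⟩⟩
      exact ⟨this.1, hqQ⟩
    · rintro ⟨hq, hqQ⟩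
      by_contra hq1
      have hq1' : q ∉ M₁ := fun hh => hq1 ⟨hh, hqQ⟩
      have := h (a := Sum.inr ⟨q, hqQ⟩) ⟨hq1', Or.inr ⟨⟨q, hqQ⟩, rfl⟩⟩
      exact this.1 hq
  · intro h x hx
    obtain ⟨hx1, hx2⟩ := hx
    refine ⟨?_, hx2⟩
    rcases hx2 with ⟨q, hqQ, rfl⟩ | ⟨q, rfl⟩
    · have : q ∈ M₂ ∩ Q := h ▸ ⟨hx1, hqQ⟩
      exact this.1
    · intro hq2
      have : (q : σ) ∈ M₁ ∩ Q := h.symm ▸ ⟨hq2, q.2⟩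
      exact hx1 this.1

lemma inter_zero_eq (P : Fin n → Set σ) (Q M₁ M₂ : Set σ) (h : M₁ ∩ Q = M₂ ∩ Q) :
    toExt Q M₁ ∩ ExtClasses P Q 0 = toExt Q M₂ ∩ ExtClasses P Q 0 :=
  Set.Subset.antisymm ((inter_zero_subset P Q M₁ M₂).mpr h)
    ((inter_zero_subset P Q M₂ M₁).mpr h.symm)

lemma inter_succ (P : Fin n → Set σ) (Q M : Set σ) (i : Fin n) :
    toExt Q M ∩ ExtClasses P Q i.succ = Sum.inl '' (M ∩ P i) := by
  have : ExtClasses P Q i.succ = Sum.inl '' P i := by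
    simp [ExtClasses]
  rw [this]
  ext x
  constructor
  · rintro ⟨hx, b, hb, rfl⟩
    exact ⟨b, ⟨hx, hb⟩, rfl⟩
  · rintro ⟨b, ⟨hbM, hbP⟩, rfl⟩
    exact ⟨hbM, b, hbP, rfl⟩

lemma prioLe_iff (P : Fin n → Set σ) (Q M₁ M₂ : Set σ) :
    prioLe (ExtClasses P Q) (∅ : Set (ExtSym σ Q)) (toExt Q M₁) (toExt Q M₂) ↔
      prioLe P Q M₁ M₂ := by
  constructor
  · rintro ⟨-, h⟩
    have h0 : M₁ ∩ Q = M₂ ∩ Q := by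
      refine (inter_zero_subset P Q M₁ M₂).mp (h 0 ?_)
      intro j hj
      exact absurd hj (by simp [Fin.lt_def])
    refine ⟨h0, fun i hpre => ?_⟩
    have key := h i.succ ?_
    · rw [inter_succ, inter_succ] at key
      exact (Set.image_subset_image_iff Sum.inl_injective).mp key
    · intro j hj
      induction j using Fin.cases with
      | zero => exact inter_zero_eq P Q M₁ M₂ h0
      | succ j' =>
        rw [inter_succ, inter_succ]
        have : j' < i := Fin.succ_lt_succ_iff.mp hj
        rw [hpre j' this]
  · rintro ⟨h0, h⟩
    refine ⟨by simp, fun i hpre => ?_⟩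
    induction i using Fin.cases with
    | zero => exact (inter_zero_subset P Q M₁ M₂).mpr h0
    | succ i' =>
      rw [inter_succ, inter_succ]
      refine Set.image_mono (h i' fun j hj => ?_)
      have := hpre j.succ (Fin.succ_lt_succ_iff.mpr hj)
      rw [inter_succ, inter_succ] at this
      exact (Set.image_eq_image Sum.inl_injective).mp this

lemma prioLt_iff (P : Fin n → Set σ) (Q M₁ M₂ : Set σ) :
    prioLt (ExtClasses P Q) (∅ : Set (ExtSym σ Q)) (toExt Q M₁) (toExt Q M₂) ↔
      prioLt P Q M₁ M₂ := by
  unfold prioLt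
  rw [prioLe_iff, prioLe_iff]

end Aux

theorem stmt15 {σ : Type*} {n : ℕ} (P : Fin n → Set σ) (Q Z : Set σ)
    (hPQ : ∀ i, Disjoint (P i) Q) (hPZ : ∀ i, Disjoint (P i) Z)
    (hQZ : Disjoint Q Z) (hPP : ∀ i j, i ≠ j → Disjoint (P i) (P j))
    (huniv : (⋃ i, P i) ∪ Q ∪ Z = Set.univ)
    (A : Set σ → Prop) (α : Set σ → Prop)
    -- `α` is a formula over `P = P₁ ∪ ... ∪ Pₙ` only
    (hα : ∀ I I' : Set σ, I ∩ (⋃ i, P i) = I' ∩ (⋃ i, P i) → (α I ↔ α I')) :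
    (∀ M : Set σ, IsPrioMinModel A P Q M → α M) ↔
    (∀ N : Set (ExtSym σ Q),
      IsPrioMinModel (ExtTheory A Q) (ExtClasses P Q) (∅ : Set (ExtSym σ Q)) N →
        α {x | Sum.inl x ∈ N}) := by
  constructor
  · intro h N hN
    obtain ⟨hTN, hmin⟩ := hN
    set M := {x | Sum.inl x ∈ N} with hM
    have hNM : N = toExt Q M := model_eq_toExt hTN
    have hmM : IsPrioMinModel A P Q M := by
      refine ⟨hTN.1, ?_⟩
      rintro ⟨M', hM', hlt⟩
      exact hmin ⟨toExt Q M', (extTheory_toExt A Q M').mpr hM',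
        (by rw [hNM]; exact (prioLt_iff P Q M' M).mpr hlt)⟩
    exact h M hmM
  · intro h M hM
    have := h (toExt Q M) ?_
    · rwa [toExt_inl] at this
    refine ⟨(extTheory_toExt A Q M).mpr hM.1, ?_⟩
    rintro ⟨N', hN', hlt⟩
    refine hM.2 ⟨{x | Sum.inl x ∈ N'}, hN'.1, ?_⟩
    rw [model_eq_toExt hN'] at hlt
    exact (prioLt_iff P Q _ M).mp hlt
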